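/- Let (F_k)_{k∈K} be a finite family of triangular faces with vertex list r : ι → ℝ³ (ι finite), whose face area vectors S_F are all nonzero, and let V = (1/6) Σ_F r_{F₀} · (r_{F₁} × r_{F₂}) be nonzero, A = Σ_F ‖S_F‖ the total surface area. Fix constants k_V, k_A, V₀, A₀ ∈ ℝ, define the energy E(r) = k_V (V − V₀)² + k_A (A − A₀)², the force on vertex a as F_a = −∇_{r_a} E, and the cell Cauchy stress tensor σ = (1/V) Σ_{a∈ι} r_a ⊗ F_a. Then σ = −2 k_V (V − V₀) I − (2 k_A (A − A₀)/V) · A · I + (2 k_A (A − A₀)/V) Σ_F (1/‖S_F‖) S_F ⊗ S_F. -/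

import Mathlib

open Matrix BigOperators

/-- Euclidean norm on `ℝ³` realized as `Fin 3 → ℝ`. -/
noncomputable def norm3 (v : Fin 3 → ℝ) : ℝ := Real.sqrt (v ⬝ᵥ v)

/-- The area vector of a triangular face `T = (T₀, T₁, T₂)` with vertex list `r`. -/
noncomputable def faceAreaVec {ι : Type*} (r : ι → Fin 3 → ℝ) (T : ι × ι × ι) : Fin 3 → ℝ :=
  (1 / 2 : ℝ) • ((r T.2.1 - r T.1) ⨯₃ (r T.2.2 - r T.1))

/-- The total surface area `A = ∑_F ‖S_F‖` of a family of triangular faces. -/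
noncomputable def polyArea {K ι : Type*} [Fintype K] (F : K → ι × ι × ι)
    (r : ι → Fin 3 → ℝ) : ℝ :=
  ∑ k : K, norm3 (faceAreaVec r (F k))

/-- The enclosed signed volume `V = (1/6) ∑_F r_{F₀} · (r_{F₁} ⨯₃ r_{F₂})`. -/
noncomputable def polyVol {K ι : Type*} [Fintype K] (F : K → ι × ι × ι)
    (r : ι → Fin 3 → ℝ) : ℝ :=
  (1 / 6 : ℝ) * ∑ k : K, r (F k).1 ⬝ᵥ ((r (F k).2.1) ⨯₃ (r (F k).2.2))

/-- The gradient of a scalar function of a single point of `ℝ³`. -/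
noncomputable def grad3 (f : (Fin 3 → ℝ) → ℝ) (x : Fin 3 → ℝ) : Fin 3 → ℝ :=
  fun i => fderiv ℝ f x (Pi.single i 1)

/-- The gradient of a scalar function of a family of points with respect to the vertex `a`. -/
noncomputable def vgrad {ι : Type*} [DecidableEq ι] (f : (ι → Fin 3 → ℝ) → ℝ)
    (r : ι → Fin 3 → ℝ) (a : ι) : Fin 3 → ℝ :=
  grad3 (fun x => f (Function.update r a x)) (r a)

/-- The vertex-model energy `E(r) = k_V (V - V₀)² + k_A (A - A₀)²`. -/
noncomputable def cellEnergy {K ι : Type*} [Fintype K] (F : K → ι × ι × ι)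
    (kV kA V₀ A₀ : ℝ) (r : ι → Fin 3 → ℝ) : ℝ :=
  kV * (polyVol F r - V₀) ^ 2 + kA * (polyArea F r - A₀) ^ 2

/-- The cell Cauchy stress tensor `σ = (1/V) ∑_a r_a ⊗ F_a` with forces `F_a = -∇_{r_a} E`. -/
noncomputable def cellStress {K ι : Type*} [Fintype K] [Fintype ι] [DecidableEq ι]
    (F : K → ι × ι × ι) (kV kA V₀ A₀ : ℝ) (r : ι → Fin 3 → ℝ) :
    Matrix (Fin 3) (Fin 3) ℝ :=
  (polyVol F r)⁻¹ •
    ∑ a : ι, vecMulVec (r a) (-(vgrad (cellEnergy F kV kA V₀ A₀) r a))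


/-! ### Auxiliary machinery -/

section Aux

local notation "E3" => (Fin 3 → ℝ)

noncomputable def dotCLM (v : E3) : E3 →L[ℝ] ℝ :=
  LinearMap.toContinuousLinearMap
    { toFun := fun u => v ⬝ᵥ u
      map_add' := fun a b => by simp [dotProduct_add]
      map_smul' := fun c a => by simp [dotProduct_smul] }

@[simp] lemma dotCLM_apply (v u : E3) : dotCLM v u = v ⬝ᵥ u := rfl

noncomputable def crossL (v : E3) : E3 →L[ℝ] E3 :=
  LinearMap.toContinuousLinearMap (crossProduct v)

noncomputable def crossR (v : E3) : E3 →L[ℝ] E3 :=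
  LinearMap.toContinuousLinearMap ((LinearMap.flip (crossProduct)) v)

@[simp] lemma crossL_apply (v u : E3) : crossL v u = v ⨯₃ u := rfl
@[simp] lemma crossR_apply (v u : E3) : crossR v u = u ⨯₃ v := rfl

lemma cross_apply' (a b : E3) (i : Fin 3) :
    (a ⨯₃ b) i = a (i+1) * b (i+2) - a (i+2) * b (i+1) := by
  fin_cases i <;> simp [cross_apply]

section Deriv
variable {α : Type*} [NormedAddCommGroup α] [NormedSpace ℝ α]
  {f g : α → E3} {f' g' : α →L[ℝ] E3} {x : α}

theorem hasFDerivAt_dot (hf : HasFDerivAt f f' x) (hg : HasFDerivAt g g' x) :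
    HasFDerivAt (fun y => f y ⬝ᵥ g y)
      ((dotCLM (g x)).comp f' + (dotCLM (f x)).comp g') x := by
  have h := HasFDerivAt.fun_sum (u := (Finset.univ : Finset (Fin 3)))
    (fun i _ => (((ContinuousLinearMap.proj i).hasFDerivAt.comp x hf).mul
      ((ContinuousLinearMap.proj i).hasFDerivAt.comp x hg)))
  convert! h using 1
  ext h
  simp [dotProduct, Fin.sum_univ_three]
  ring

theorem hasFDerivAt_cross (hf : HasFDerivAt f f' x) (hg : HasFDerivAt g g' x) :
    HasFDerivAt (fun y => f y ⨯₃ g y)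
      ((crossL (f x)).comp g' + (crossR (g x)).comp f') x := by
  apply hasFDerivAt_pi''
  intro i
  have hfi := fun j => hasFDerivAt_pi'.1 hf j
  have hgi := fun j => hasFDerivAt_pi'.1 hg j
  have h1 := ((hfi (i+1)).mul (hgi (i+2))).sub ((hfi (i+2)).mul (hgi (i+1)))
  convert h1 using 1
  · funext y; exact cross_apply' (f y) (g y) i
  · ext h
    simp [cross_apply']
    ring
end Deriv

lemma dot_self_pos {v : E3} (hv : v ≠ 0) : 0 < v ⬝ᵥ v := by
  have h0 : (0:ℝ) ≤ v ⬝ᵥ v := by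
    simpa [dotProduct] using
      Finset.sum_nonneg (fun i (_ : i ∈ Finset.univ) => mul_self_nonneg (v i))
  rcases h0.lt_or_eq with h | h
  · exact h
  · exact absurd (dotProduct_self_eq_zero.mp h.symm) hv

lemma norm3_pos {v : E3} (hv : v ≠ 0) : 0 < norm3 v :=
  Real.sqrt_pos.mpr (dot_self_pos hv)

lemma norm3_sq {v : E3} : norm3 v ^ 2 = v ⬝ᵥ v := by
  have h0 : (0:ℝ) ≤ v ⬝ᵥ v := by
    simpa [dotProduct] using
      Finset.sum_nonneg (fun i (_ : i ∈ Finset.univ) => mul_self_nonneg (v i))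
  simp only [norm3]; exact Real.sq_sqrt h0

lemma hasFDerivAt_norm3 {v : E3} (hv : v ≠ 0) :
    HasFDerivAt norm3 ((norm3 v)⁻¹ • dotCLM v) v := by
  have hq : HasFDerivAt (fun w : E3 => w ⬝ᵥ w)
      ((dotCLM v).comp (ContinuousLinearMap.id ℝ E3)
        + (dotCLM v).comp (ContinuousLinearMap.id ℝ E3)) v :=
    hasFDerivAt_dot (hasFDerivAt_id v) (hasFDerivAt_id v)
  have hne : v ⬝ᵥ v ≠ 0 := (dot_self_pos hv).ne'
  have hs := HasDerivAt.comp_hasFDerivAt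
    (f := fun w : E3 => w ⬝ᵥ w) v (Real.hasDerivAt_sqrt hne) hq
  have hpos := norm3_pos hv
  have h3 : norm3 v = Real.sqrt (v ⬝ᵥ v) := rfl
  convert! hs using 1
  ext h
  simp [norm3, ContinuousLinearMap.smul_apply]
  rw [h3] at hpos
  field_simp
  ring


lemma triple_cyclic (p q s : Fin 3 → ℝ) : p ⬝ᵥ (q ⨯₃ s) = s ⬝ᵥ (p ⨯₃ q) := by
  simp [dotProduct, cross_apply, Fin.sum_univ_three]; ring

lemma dot_single (s : Fin 3 → ℝ) (j : Fin 3) : s ⬝ᵥ Pi.single j 1 = s j := by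
  fin_cases j <;>
    simp [dotProduct, Fin.sum_univ_three, Pi.single_apply]

lemma single_dot (s : Fin 3 → ℝ) (j : Fin 3) : Pi.single j 1 ⬝ᵥ s = s j := by
  rw [dotProduct_comm, dot_single]

lemma dot_cross_single_right (u v : Fin 3 → ℝ) (j : Fin 3) :
    u ⬝ᵥ (v ⨯₃ Pi.single j 1) = (u ⨯₃ v) j := by
  rw [triple_cyclic, single_dot]

lemma dot_cross_single_left (u w : Fin 3 → ℝ) (j : Fin 3) :
    u ⬝ᵥ (Pi.single j 1 ⨯₃ w) = (w ⨯₃ u) j := by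
  rw [triple_cyclic, triple_cyclic, single_dot]

section Grad
variable {K ι : Type*} [Fintype K] [DecidableEq ι]

noncomputable def updD {ι : Type*} [DecidableEq ι] (a b : ι) : (Fin 3 → ℝ) →L[ℝ] (Fin 3 → ℝ) :=
  if b = a then ContinuousLinearMap.id ℝ (Fin 3 → ℝ) else 0

lemma upd_hasFDerivAt (r : ι → Fin 3 → ℝ) (a b : ι) :
    HasFDerivAt (fun x : Fin 3 → ℝ => Function.update r a x b) (updD a b) (r a) := by
  rcases eq_or_ne b a with h | h
  · subst h
    have he : (fun x : Fin 3 → ℝ => Function.update r b x b) = fun x => x := by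
      funext x; simp
    rw [updD, if_pos rfl, he]
    exact hasFDerivAt_id _
  · have he : (fun x : Fin 3 → ℝ => Function.update r a x b) = fun _ => r b := by
      funext x; exact Function.update_of_ne h _ _
    rw [updD, if_neg h, he]
    exact hasFDerivAt_const _ _

noncomputable def volCLM (F : K → ι × ι × ι) (r : ι → Fin 3 → ℝ) (a : ι) :
    (Fin 3 → ℝ) →L[ℝ] ℝ :=
  (1/6 : ℝ) • ∑ k : K,
    ((dotCLM (r (F k).2.1 ⨯₃ r (F k).2.2)).comp (updD a (F k).1)
      + (dotCLM (r (F k).1)).comp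
          ((crossL (r (F k).2.1)).comp (updD a (F k).2.2)
            + (crossR (r (F k).2.2)).comp (updD a (F k).2.1)))

lemma hasFDerivAt_polyVol (F : K → ι × ι × ι) (r : ι → Fin 3 → ℝ) (a : ι) :
    HasFDerivAt (fun x => polyVol F (Function.update r a x)) (volCLM F r a) (r a) := by
  have h := HasFDerivAt.const_mul
    (HasFDerivAt.fun_sum (u := (Finset.univ : Finset K)) (fun k _ =>
      hasFDerivAt_dot (upd_hasFDerivAt r a (F k).1)
        (hasFDerivAt_cross (upd_hasFDerivAt r a (F k).2.1)
          (upd_hasFDerivAt r a (F k).2.2)))) (1/6 : ℝ)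
  simp only [Function.update_eq_self] at h
  exact h

lemma vgrad_polyVol (F : K → ι × ι × ι) (r : ι → Fin 3 → ℝ) (a : ι) (j : Fin 3) :
    vgrad (polyVol F) r a j
      = (1/6 : ℝ) * ∑ k : K,
          ((if (F k).1 = a then (r (F k).2.1 ⨯₃ r (F k).2.2) j else 0)
            + ((if (F k).2.2 = a then (r (F k).1 ⨯₃ r (F k).2.1) j else 0)
              + (if (F k).2.1 = a then (r (F k).2.2 ⨯₃ r (F k).1) j else 0))) := by
  have hf := (hasFDerivAt_polyVol F r a).fderiv
  simp only [vgrad, grad3, hf]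
  simp only [volCLM, updD, ContinuousLinearMap.smul_apply,
    ContinuousLinearMap.sum_apply, ContinuousLinearMap.add_apply,
    ContinuousLinearMap.comp_apply,
    apply_ite (fun L : (Fin 3 → ℝ) →L[ℝ] (Fin 3 → ℝ) => L (Pi.single j (1:ℝ))),
    ContinuousLinearMap.zero_apply, ContinuousLinearMap.id_apply,
    dotCLM_apply, crossL_apply, crossR_apply, smul_eq_mul]
  congr 1
  refine Finset.sum_congr rfl fun k _ => ?_
  rcases eq_or_ne (F k).1 a with h1 | h1 <;>
  rcases eq_or_ne (F k).2.1 a with h2 | h2 <;>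
  rcases eq_or_ne (F k).2.2 a with h3 | h3 <;>
    simp only [h1, h2, h3, if_true, if_false, eq_self_iff_true, ite_true, ite_false,
      map_zero, dotProduct_zero, add_zero, zero_add,
      dot_single, dot_cross_single_right, dot_cross_single_left] <;>
    (try rfl) <;> fin_cases j <;>
      simp [cross_apply, dotProduct, Fin.sum_univ_three, Pi.single_apply] <;> ring


noncomputable def dSCLM (F : K → ι × ι × ι) (r : ι → Fin 3 → ℝ) (a : ι) (k : K) :
    (Fin 3 → ℝ) →L[ℝ] (Fin 3 → ℝ) :=
  (1/2 : ℝ) • ((crossL (r (F k).2.1 - r (F k).1)).comp (updD a (F k).2.2 - updD a (F k).1)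
    + (crossR (r (F k).2.2 - r (F k).1)).comp (updD a (F k).2.1 - updD a (F k).1))

lemma hasFDerivAt_faceAreaVec (F : K → ι × ι × ι) (r : ι → Fin 3 → ℝ) (a : ι) (k : K) :
    HasFDerivAt (fun x => faceAreaVec (Function.update r a x) (F k))
      (dSCLM F r a k) (r a) := by
  have hf := (upd_hasFDerivAt r a (F k).2.1).fun_sub (upd_hasFDerivAt r a (F k).1)
  have hg := (upd_hasFDerivAt r a (F k).2.2).fun_sub (upd_hasFDerivAt r a (F k).1)
  have h := (hasFDerivAt_cross hf hg).fun_const_smul (1/2 : ℝ)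
  simp only [Function.update_eq_self] at h
  exact h

noncomputable def areaCLM (F : K → ι × ι × ι) (r : ι → Fin 3 → ℝ) (a : ι) :
    (Fin 3 → ℝ) →L[ℝ] ℝ :=
  ∑ k : K, (norm3 (faceAreaVec r (F k)))⁻¹ •
      (dotCLM (faceAreaVec r (F k))).comp (dSCLM F r a k)

lemma hasFDerivAt_polyArea (F : K → ι × ι × ι) (r : ι → Fin 3 → ℝ) (a : ι)
    (hS : ∀ k : K, faceAreaVec r (F k) ≠ 0) :
    HasFDerivAt (fun x => polyArea F (Function.update r a x)) (areaCLM F r a) (r a) := by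
  have h : ∀ k : K, HasFDerivAt (fun x => norm3 (faceAreaVec (Function.update r a x) (F k)))
      ((norm3 (faceAreaVec r (F k)))⁻¹ •
        (dotCLM (faceAreaVec r (F k))).comp (dSCLM F r a k)) (r a) := by
    intro k
    have hpt : faceAreaVec (Function.update r a (r a)) (F k) = faceAreaVec r (F k) := by
      rw [Function.update_eq_self]
    have hn : HasFDerivAt norm3
        ((norm3 (faceAreaVec r (F k)))⁻¹ • dotCLM (faceAreaVec r (F k)))
        (faceAreaVec (Function.update r a (r a)) (F k)) := by
      rw [hpt]; exact hasFDerivAt_norm3 (hS k)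
    have := hn.comp (r a) (hasFDerivAt_faceAreaVec F r a k)
    simp only [ContinuousLinearMap.smul_comp] at this; exact this
  exact HasFDerivAt.fun_sum (u := (Finset.univ : Finset K)) (fun k _ => h k)

lemma vgrad_polyArea (F : K → ι × ι × ι) (r : ι → Fin 3 → ℝ) (a : ι)
    (hS : ∀ k : K, faceAreaVec r (F k) ≠ 0) (j : Fin 3) :
    vgrad (polyArea F) r a j
      = ∑ k : K, (norm3 (faceAreaVec r (F k)))⁻¹ *
          ((1/2 : ℝ) *
            (((if (F k).2.2 = a then
                  faceAreaVec r (F k) ⬝ᵥ ((r (F k).2.1 - r (F k).1) ⨯₃ Pi.single j 1) else 0)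
              - (if (F k).1 = a then
                  faceAreaVec r (F k) ⬝ᵥ ((r (F k).2.1 - r (F k).1) ⨯₃ Pi.single j 1) else 0))
            + ((if (F k).2.1 = a then
                  faceAreaVec r (F k) ⬝ᵥ (Pi.single j 1 ⨯₃ (r (F k).2.2 - r (F k).1)) else 0)
              - (if (F k).1 = a then
                  faceAreaVec r (F k) ⬝ᵥ (Pi.single j 1 ⨯₃ (r (F k).2.2 - r (F k).1)) else 0)))) := by
  have hf := (hasFDerivAt_polyArea F r a hS).fderiv
  simp only [vgrad, grad3, hf]
  simp only [areaCLM, dSCLM, updD, ContinuousLinearMap.sum_apply,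
    ContinuousLinearMap.smul_apply, ContinuousLinearMap.comp_apply,
    ContinuousLinearMap.add_apply, ContinuousLinearMap.sub_apply,
    apply_ite (fun L : (Fin 3 → ℝ) →L[ℝ] (Fin 3 → ℝ) => L (Pi.single j (1:ℝ))),
    ContinuousLinearMap.zero_apply, ContinuousLinearMap.id_apply,
    dotCLM_apply, crossL_apply, crossR_apply, smul_eq_mul]
  refine Finset.sum_congr rfl fun k _ => ?_
  rcases eq_or_ne (F k).1 a with h1 | h1 <;>
  rcases eq_or_ne (F k).2.1 a with h2 | h2 <;>
  rcases eq_or_ne (F k).2.2 a with h3 | h3 <;>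
    simp only [h1, h2, h3, if_true, if_false, eq_self_iff_true, ite_true, ite_false,
      sub_zero, zero_sub, sub_self, map_zero, LinearMap.map_zero,
      dotProduct_zero, dotProduct_smul, dotProduct_add,
      smul_dotProduct, smul_eq_mul, add_zero, zero_add] <;>
    first
      | rfl
      | (fin_cases j <;>
          simp [faceAreaVec, cross_apply, dotProduct, Fin.sum_univ_three,
            Pi.single_apply, Pi.smul_apply, Pi.sub_apply, smul_eq_mul,
            -mul_eq_mul_left_iff] <;> ring)


end Grad



lemma vol_face_id (u v w : Fin 3 → ℝ) (i j : Fin 3) :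
    u i * (v ⨯₃ w) j + (w i * (u ⨯₃ v) j + v i * (w ⨯₃ u) j)
      = (u ⬝ᵥ (v ⨯₃ w)) * (if i = j then 1 else 0) := by
  fin_cases i <;> fin_cases j <;>
    simp [cross_apply, dotProduct, Fin.sum_univ_three] <;> ring

lemma area_face_id (u v w : Fin 3 → ℝ) (i j : Fin 3) :
    (1/2 : ℝ) * ((w i - u i) *
        (((1/2 : ℝ) • ((v - u) ⨯₃ (w - u))) ⬝ᵥ ((v - u) ⨯₃ Pi.single j 1))
      + (v i - u i) *
        (((1/2 : ℝ) • ((v - u) ⨯₃ (w - u))) ⬝ᵥ (Pi.single j 1 ⨯₃ (w - u))))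
      = (((1/2 : ℝ) • ((v - u) ⨯₃ (w - u))) ⬝ᵥ ((1/2 : ℝ) • ((v - u) ⨯₃ (w - u))))
          * (if i = j then 1 else 0)
        - ((1/2 : ℝ) • ((v - u) ⨯₃ (w - u))) i * ((1/2 : ℝ) • ((v - u) ⨯₃ (w - u))) j := by
  fin_cases i <;> fin_cases j <;>
    simp [cross_apply, dotProduct, Fin.sum_univ_three, Pi.single_apply,
      Pi.smul_apply, Pi.sub_apply, smul_eq_mul] <;> ring

section Sums
variable {K ι : Type*} [Fintype K] [Fintype ι] [DecidableEq ι]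

lemma sum_swap_aux (r : ι → Fin 3 → ℝ) (i : Fin 3) (c : ℝ) (X : ι → K → ℝ) :
    ∑ a : ι, r a i * (c * ∑ k : K, X a k) = c * ∑ k : K, ∑ a : ι, r a i * X a k := by
  calc ∑ a : ι, r a i * (c * ∑ k : K, X a k)
      = ∑ a : ι, ∑ k : K, c * (r a i * X a k) := by
        refine Finset.sum_congr rfl fun a _ => ?_
        rw [Finset.mul_sum, Finset.mul_sum]
        exact Finset.sum_congr rfl fun k _ => by ring
    _ = ∑ k : K, ∑ a : ι, c * (r a i * X a k) := Finset.sum_comm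
    _ = c * ∑ k : K, ∑ a : ι, r a i * X a k := by
        rw [Finset.mul_sum]
        exact Finset.sum_congr rfl fun k _ => by rw [Finset.mul_sum]

lemma sumV (F : K → ι × ι × ι) (r : ι → Fin 3 → ℝ) (i j : Fin 3) :
    ∑ a : ι, r a i * vgrad (polyVol F) r a j
      = polyVol F r * (if i = j then 1 else 0) := by
  simp only [vgrad_polyVol]
  rw [sum_swap_aux]
  have inner : ∀ k : K, ∑ a : ι,
      r a i * ((if (F k).1 = a then (r (F k).2.1 ⨯₃ r (F k).2.2) j else 0)
        + ((if (F k).2.2 = a then (r (F k).1 ⨯₃ r (F k).2.1) j else 0)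
          + (if (F k).2.1 = a then (r (F k).2.2 ⨯₃ r (F k).1) j else 0)))
      = (r (F k).1 ⬝ᵥ (r (F k).2.1 ⨯₃ r (F k).2.2)) * (if i = j then 1 else 0) := by
    intro k
    rw [← vol_face_id (r (F k).1) (r (F k).2.1) (r (F k).2.2) i j]
    simp [mul_add, mul_ite, mul_zero, Finset.sum_add_distrib, Finset.sum_ite_eq]
  simp only [inner]
  rw [← Finset.sum_mul, polyVol]
  ring

lemma sumA (F : K → ι × ι × ι) (r : ι → Fin 3 → ℝ)
    (hS : ∀ k : K, faceAreaVec r (F k) ≠ 0) (i j : Fin 3) :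
    ∑ a : ι, r a i * vgrad (polyArea F) r a j
      = polyArea F r * (if i = j then 1 else 0)
        - ∑ k : K, (norm3 (faceAreaVec r (F k)))⁻¹ *
            (faceAreaVec r (F k) i * faceAreaVec r (F k) j) := by
  simp only [vgrad_polyArea F r _ hS]
  rw [show ∀ X : ι → K → ℝ, (∑ a : ι, r a i * ∑ k : K, X a k)
      = (1:ℝ) * ∑ k : K, ∑ a : ι, r a i * X a k
    from fun X => by simpa using sum_swap_aux r i 1 X, one_mul]
  have inner : ∀ k : K, (∑ a : ι,
      r a i * ((norm3 (faceAreaVec r (F k)))⁻¹ *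
        ((1/2 : ℝ) *
          (((if (F k).2.2 = a then
                faceAreaVec r (F k) ⬝ᵥ ((r (F k).2.1 - r (F k).1) ⨯₃ Pi.single j 1) else 0)
            - (if (F k).1 = a then
                faceAreaVec r (F k) ⬝ᵥ ((r (F k).2.1 - r (F k).1) ⨯₃ Pi.single j 1) else 0))
          + ((if (F k).2.1 = a then
                faceAreaVec r (F k) ⬝ᵥ (Pi.single j 1 ⨯₃ (r (F k).2.2 - r (F k).1)) else 0)
            - (if (F k).1 = a then
                faceAreaVec r (F k) ⬝ᵥ (Pi.single j 1 ⨯₃ (r (F k).2.2 - r (F k).1)) else 0))))))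
      = norm3 (faceAreaVec r (F k)) * (if i = j then 1 else 0)
        - (norm3 (faceAreaVec r (F k)))⁻¹ *
            (faceAreaVec r (F k) i * faceAreaVec r (F k) j) := by
    intro k
    set u := r (F k).1
    set v := r (F k).2.1
    set w := r (F k).2.2
    set S := faceAreaVec r (F k) with hSdef
    have hexp : S = (1/2 : ℝ) • ((v - u) ⨯₃ (w - u)) := rfl
    have hsum : (∑ a : ι,
        r a i * ((norm3 S)⁻¹ * ((1/2 : ℝ) *
          (((if (F k).2.2 = a then S ⬝ᵥ ((v - u) ⨯₃ Pi.single j 1) else 0)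
            - (if (F k).1 = a then S ⬝ᵥ ((v - u) ⨯₃ Pi.single j 1) else 0))
          + ((if (F k).2.1 = a then S ⬝ᵥ (Pi.single j 1 ⨯₃ (w - u)) else 0)
            - (if (F k).1 = a then S ⬝ᵥ (Pi.single j 1 ⨯₃ (w - u)) else 0))))))
        = (norm3 S)⁻¹ * ((1/2 : ℝ) *
            ((w i - u i) * (S ⬝ᵥ ((v - u) ⨯₃ Pi.single j 1))
              + (v i - u i) * (S ⬝ᵥ (Pi.single j 1 ⨯₃ (w - u))))) := by
      simp only [mul_ite, mul_zero, mul_sub, mul_add, Finset.sum_add_distrib,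
        Finset.sum_sub_distrib, Finset.sum_ite_eq, Finset.mem_univ, if_true]
      ring
    rw [hsum]
    have hid := area_face_id u v w i j
    rw [← hexp] at hid
    rw [hid]
    have h2 : S ⬝ᵥ S = norm3 S ^ 2 := norm3_sq.symm
    have h0 : norm3 S ≠ 0 := (norm3_pos (hS k)).ne'
    rw [h2]
    field_simp
  simp only [inner]
  rw [Finset.sum_sub_distrib, ← Finset.sum_mul, polyArea]

lemma vgrad_cellEnergy (F : K → ι × ι × ι) (r : ι → Fin 3 → ℝ)
    (hS : ∀ k : K, faceAreaVec r (F k) ≠ 0) (kV kA V₀ A₀ : ℝ) (a : ι) :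
    vgrad (cellEnergy F kV kA V₀ A₀) r a = fun j =>
      2 * kV * (polyVol F r - V₀) * vgrad (polyVol F) r a j
        + 2 * kA * (polyArea F r - A₀) * vgrad (polyArea F) r a j := by
  have hv := hasFDerivAt_polyVol F r a
  have ha := hasFDerivAt_polyArea F r a hS
  have h1 := (((hv.sub_const V₀).fun_mul (hv.sub_const V₀))).const_mul kV
  have h2 := (((ha.sub_const A₀).fun_mul (ha.sub_const A₀))).const_mul kA
  have hE := h1.fun_add h2
  simp only [Function.update_eq_self] at hE
  have hE' : HasFDerivAt (fun x => cellEnergy F kV kA V₀ A₀ (Function.update r a x))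
      ((2 * kV * (polyVol F r - V₀)) • volCLM F r a
        + (2 * kA * (polyArea F r - A₀)) • areaCLM F r a) (r a) := by
    convert! hE using 1
    · funext x
      simp only [cellEnergy]
      ring
    · ext y
      simp only [ContinuousLinearMap.add_apply, ContinuousLinearMap.smul_apply,
        smul_eq_mul]
      ring
  funext j
  simp only [vgrad, grad3, hE'.fderiv, hv.fderiv, ha.fderiv,
    ContinuousLinearMap.add_apply, ContinuousLinearMap.smul_apply, smul_eq_mul]

end Sums

end Aux

/-- The cell Cauchy stress tensor of the vertex-model energy satisfies
`σ = -2 k_V (V - V₀) I - (2 k_A (A - A₀)/V) A I + (2 k_A (A - A₀)/V) ∑_F (1/‖S_F‖) S_F ⊗ S_F`. -/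
theorem stmt11 {K ι : Type*} [Fintype K] [Fintype ι] [DecidableEq ι]
    (F : K → ι × ι × ι) (r : ι → Fin 3 → ℝ)
    (hS : ∀ k : K, faceAreaVec r (F k) ≠ 0) (hV : polyVol F r ≠ 0)
    (kV kA V₀ A₀ : ℝ) :
    cellStress F kV kA V₀ A₀ r
      = (-(2 * kV * (polyVol F r - V₀))) • (1 : Matrix (Fin 3) (Fin 3) ℝ)
        - (2 * kA * (polyArea F r - A₀) / polyVol F r * polyArea F r) •
            (1 : Matrix (Fin 3) (Fin 3) ℝ)
        + (2 * kA * (polyArea F r - A₀) / polyVol F r) •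
            ∑ k : K, (norm3 (faceAreaVec r (F k)))⁻¹ •
              vecMulVec (faceAreaVec r (F k)) (faceAreaVec r (F k)) := by
  ext i j
  have hE := vgrad_cellEnergy F r hS kV kA V₀ A₀
  simp only [cellStress, Matrix.smul_apply, Matrix.sub_apply, Matrix.add_apply,
    Matrix.one_apply, Matrix.sum_apply, Matrix.vecMulVec_apply, Pi.neg_apply,
    smul_eq_mul]
  have hterm : ∀ a : ι, r a i * -(vgrad (cellEnergy F kV kA V₀ A₀) r a j)
      = -(2 * kV * (polyVol F r - V₀) * (r a i * vgrad (polyVol F) r a j)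
          + 2 * kA * (polyArea F r - A₀) * (r a i * vgrad (polyArea F) r a j)) := by
    intro a
    rw [hE a]
    ring
  simp only [hterm, Finset.sum_neg_distrib, Finset.sum_add_distrib, ← Finset.mul_sum]
  rw [sumV F r i j, sumA F r hS i j]
  set Q := ∑ k : K, (norm3 (faceAreaVec r (F k)))⁻¹ *
      (faceAreaVec r (F k) i * faceAreaVec r (F k) j) with hQ
  rcases eq_or_ne i j with hij | hij <;>
    simp only [hij, if_true, if_false, eq_self_iff_true, ite_true, ite_false,
      mul_one, mul_zero] <;>
    field_simp <;> ring
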